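/- arXiv:1010.5963 — 2 statements merged into one kernel-verified Lean document; each statement's English description precedes it below -/
import Mathlib

section
/- For all d ≥ 0 and k ≥ 1, the Eulerian number E_{d+k,d} (the number of permutations of length d+k having exactly d descents) satisfies E_{d+k,d} = Σ (d+k)! · det(B(a_1,...,a_k)), the sum being over all k-tuples (a_1,...,a_k) of integers with each a_i ≥ 1 and a_1 + ... + a_k = d+k, where B(a_1,...,a_k) is the k×k matrix with entries: b_{i,j} = 1/(a_i + a_{i+1} + ... + a_j)! when i ≤ j; b_{i,i-1} = 1; and b_{i,j} = 0 when i ≥ j+2. -/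
/-- The number of descents of a word (list of naturals), i.e. the number of
positions `i` (0-indexed) with `l[i] > l[i+1]`. -/
def descents (l : List ℕ) : ℕ :=
  ((List.range (l.length - 1)).filter (fun i => l.getD (i + 1) 0 < l.getD i 0)).length

/-- The matrix `B(a_1, ..., a_k)`: entry `(i,j)` is `1/(a_i + ⋯ + a_j)!` for
`i ≤ j`, is `1` for `i = j + 1`, and is `0` for `i ≥ j + 2` (0-indexed here). -/
def Bmat {k : ℕ} (a : Fin k → ℕ) : Matrix (Fin k) (Fin k) ℚ :=
  Matrix.of fun i j =>
    if (i : ℕ) ≤ (j : ℕ) then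
      (1 : ℚ) / (Nat.factorial (∑ m ∈ Finset.Icc i j, a m) : ℚ)
    else if (i : ℕ) = (j : ℕ) + 1 then 1
    else 0



/-- lengths of maximal strictly increasing runs -/
def runs : List ℕ → List ℕ
  | [] => []
  | [_] => [1]
  | x :: y :: t => if y < x then 1 :: runs (y :: t)
      else ((runs (y :: t)).headI + 1) :: (runs (y :: t)).tail

@[simp] lemma runs_nil : runs [] = [] := rfl
@[simp] lemma runs_single (x : ℕ) : runs [x] = [1] := rfl

lemma runs_cons_cons (x y : ℕ) (t : List ℕ) : runs (x :: y :: t) =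
    if y < x then 1 :: runs (y :: t)
    else ((runs (y :: t)).headI + 1) :: (runs (y :: t)).tail := rfl

lemma runs_ne_nil (l : List ℕ) (h : l ≠ []) : runs l ≠ [] := by
  match l with
  | [_] => simp
  | x :: y :: t => rw [runs_cons_cons]; split <;> simp

lemma runs_cons_exists (y : ℕ) (t : List ℕ) : ∃ h tl, runs (y :: t) = h :: tl := by
  rcases e : runs (y :: t) with _ | ⟨h, tl⟩
  · exact absurd e (runs_ne_nil _ (by simp))
  · exact ⟨h, tl, rfl⟩

lemma runs_pos : ∀ l : List ℕ, ∀ b ∈ runs l, 1 ≤ b := by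
  intro l
  match l with
  | [] => simp
  | [x] => simp
  | x :: y :: t =>
    rw [runs_cons_cons]
    have IH := runs_pos (y :: t)
    split
    · rintro b hb
      rcases List.mem_cons.1 hb with h | h
      · omega
      · exact IH _ h
    · rintro b hb
      rcases List.mem_cons.1 hb with h | h
      · omega
      · exact IH _ (List.mem_of_mem_tail h)

lemma runs_sum : ∀ l : List ℕ, (runs l).sum = l.length := by
  intro l
  match l with
  | [] => simp
  | [x] => simp
  | x :: y :: t =>
    have IH := runs_sum (y :: t)
    obtain ⟨h, tl, e⟩ := runs_cons_exists y t
    rw [runs_cons_cons]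
    rw [e] at IH ⊢
    simp only [List.sum_cons, List.length_cons] at IH ⊢
    split <;> simp <;> omega

@[simp] lemma descents_nil : descents [] = 0 := rfl
@[simp] lemma descents_single (x : ℕ) : descents [x] = 0 := rfl

lemma descents_cons_cons (x y : ℕ) (t : List ℕ) :
    descents (x :: y :: t) = (if y < x then 1 else 0) + descents (y :: t) := by
  unfold descents
  simp only [List.length_cons, Nat.add_sub_cancel]
  rw [List.range_succ_eq_map, List.filter_cons, List.filter_map]
  have : ((fun i => decide ((x :: y :: t).getD (i + 1) 0 < (x :: y :: t).getD i 0)) ∘ Nat.succ)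
      = (fun i => decide ((y :: t).getD (i + 1) 0 < (y :: t).getD i 0)) := by
    funext i
    simp [List.getD_cons_succ]
  rw [this]
  split <;> split <;> simp_all [List.getD] <;> omega

lemma runs_length : ∀ l : List ℕ, l ≠ [] → (runs l).length = descents l + 1 := by
  intro l
  match l with
  | [] => intro h; exact absurd rfl h
  | [x] => simp
  | x :: y :: t =>
    intro _
    have IH := runs_length (y :: t) (by simp)
    obtain ⟨h, tl, e⟩ := runs_cons_exists y t
    rw [runs_cons_cons, descents_cons_cons]
    rw [e] at IH ⊢
    simp only [List.length_cons] at IH ⊢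
    split <;> simp <;> omega


/-- ascending chain relation -/
abbrev Asc : ℕ → ℕ → Prop := fun u v => ¬ v < u

lemma runs_of_chain : ∀ l : List ℕ, l ≠ [] → List.IsChain Asc l → runs l = [l.length] := by
  intro l
  match l with
  | [] => intro h; exact absurd rfl h
  | [x] => intros; rfl
  | x :: y :: t =>
    intro _ hc
    rw [List.isChain_cons_cons] at hc
    have IH := runs_of_chain (y :: t) (by simp) hc.2
    rw [runs_cons_cons, if_neg hc.1, IH]
    simp

lemma chain_take_of_runs : ∀ (l : List ℕ) (b : ℕ) (r : List ℕ), runs l = b :: r →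
    ∀ c, 1 ≤ c → c ≤ b →
    List.IsChain Asc (l.take c) ∧ runs (l.drop c) = if c = b then r else (b - c) :: r := by
  intro l
  match l with
  | [] =>
    intro b r hbr
    have : ([] : List ℕ) = b :: r := hbr
    simp at this
  | [x] =>
    intro b r hbr c h1 h2
    have hb : 1 = b ∧ [] = r := by
      have : runs [x] = [1] := rfl
      rw [this] at hbr
      exact ⟨(List.cons.injEq .. ▸ hbr).1, (List.cons.injEq .. ▸ hbr).2⟩
    obtain ⟨rfl, rfl⟩ := hb
    have hc : c = 1 := by omega
    subst hc
    refine ⟨by simp, ?_⟩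
    simp only [List.drop_succ_cons, List.drop_zero]
    rfl
  | x :: y :: t =>
    intro b r hbr c h1 h2
    rw [runs_cons_cons] at hbr
    obtain ⟨h, tl, e⟩ := runs_cons_exists y t
    have hpos : 1 ≤ h := runs_pos (y :: t) h (e ▸ List.mem_cons_self)
    by_cases hyx : y < x
    · rw [if_pos hyx] at hbr
      injection hbr with hb hr
      have hc : c = 1 := by omega
      subst hc hb hr
      refine ⟨by simp, ?_⟩
      rw [if_pos (by omega), List.drop_one]
      simp
    · rw [if_neg hyx, e] at hbr
      simp only [List.headI, List.tail] at hbr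
      injection hbr with hb hr
      subst hb hr
      rcases Nat.eq_or_lt_of_le h1 with hc1 | hc2
      · rw [if_neg (by omega)]
        refine ⟨by rw [← hc1]; simp, ?_⟩
        rw [← hc1]
        have hd1 : (x :: y :: t).drop 1 = y :: t := rfl
        rw [hd1, e]
        simp
      · obtain ⟨c', rfl⟩ : ∃ c', c = c' + 1 := ⟨c - 1, by omega⟩
        have hc' : 1 ≤ c' := by omega
        have IH := chain_take_of_runs (y :: t) h tl e c' hc' (by omega)
        have htake : (x :: y :: t).take (c' + 1) = x :: (y :: t).take c' := rfl
        have htk : (y :: t).take c' = y :: t.take (c' - 1) := by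
          obtain ⟨c'', rfl⟩ : ∃ c'', c' = c'' + 1 := ⟨c' - 1, by omega⟩
          simp
        constructor
        · rw [htake, htk]
          rw [htk] at IH
          exact List.isChain_cons_cons.2 ⟨hyx, IH.1⟩
        · have hdrop : (x :: y :: t).drop (c' + 1) = (y :: t).drop c' := rfl
          rw [hdrop, IH.2]
          by_cases hch : c' = h
          · rw [if_pos hch, if_pos (by omega)]
          · rw [if_neg hch, if_neg (by omega)]
            congr 1
            omega

lemma runs_structure : ∀ (c : ℕ) (l : List ℕ), 1 ≤ c → c < l.length →
    List.IsChain Asc (l.take c) →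
    runs l = if l.getD c 0 < l.getD (c - 1) 0 then c :: runs (l.drop c)
      else (c + (runs (l.drop c)).headI) :: (runs (l.drop c)).tail := by
  intro c
  induction c with
  | zero => omega
  | succ c' IH =>
    intro l h1 h2 hc
    match l with
    | [] => simp at h2
    | [x] => simp at h2
    | x :: y :: t =>
      rcases Nat.eq_zero_or_pos c' with rfl | hc'
      · rw [runs_cons_cons]
        simp only [List.getD_cons_succ, List.getD_cons_zero, Nat.sub_self, List.drop_one]
        simp only [List.drop_succ_cons, List.drop_zero]
        split
        · rfl
        · rw [Nat.add_comm]
      · have htk : (x :: y :: t).take (c' + 1) = x :: (y :: t).take c' := rfl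
        rw [htk] at hc
        have htk2 : (y :: t).take c' = y :: t.take (c' - 1) := by
          obtain ⟨c'', rfl⟩ : ∃ c'', c' = c'' + 1 := ⟨c' - 1, by omega⟩
          simp
        have hxy : ¬ y < x := by
          rw [htk2] at hc
          exact (List.isChain_cons_cons.1 hc).1
        have hIH := IH (y :: t) hc' (by simp at h2 ⊢; omega) (by rw [htk2] at hc; exact htk2 ▸ (List.isChain_cons_cons.1 hc).2)
        have hget1 : (x :: y :: t).getD (c' + 1) 0 = (y :: t).getD c' 0 := rfl
        have hget2 : (x :: y :: t).getD (c' + 1 - 1) 0 = (y :: t).getD (c' - 1) 0 := by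
          obtain ⟨c'', rfl⟩ : ∃ c'', c' = c'' + 1 := ⟨c' - 1, by omega⟩
          rfl
        have hdrop : (x :: y :: t).drop (c' + 1) = (y :: t).drop c' := rfl
        rw [runs_cons_cons, if_neg hxy, hIH, hget1, hget2, hdrop]
        split
        · simp
        · simp
          omega


def permsOf (s : Finset ℕ) : Finset (List ℕ) :=
  ⟨((s.sort (· ≤ ·)).permutations : Multiset (List ℕ)),
    List.nodup_permutations _ (s.sort_nodup (· ≤ ·))⟩

lemma mem_permsOf {s : Finset ℕ} {l : List ℕ} :
    l ∈ permsOf s ↔ l.Nodup ∧ l.toFinset = s := by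
  have h1 : l ∈ permsOf s ↔ l.Perm (s.sort (· ≤ ·)) := List.mem_permutations
  rw [h1]
  constructor
  · intro h
    refine ⟨h.nodup_iff.2 (s.sort_nodup _), ?_⟩
    ext x
    rw [List.mem_toFinset, h.mem_iff, Finset.mem_sort]
  · rintro ⟨hn, rfl⟩
    rw [List.perm_ext_iff_of_nodup hn (Finset.sort_nodup _ _)]
    intro x
    rw [Finset.mem_sort, List.mem_toFinset]

lemma length_of_mem_permsOf {s : Finset ℕ} {l : List ℕ} (h : l ∈ permsOf s) :
    l.length = s.card := by
  have h1 : l.Perm (s.sort (· ≤ ·)) := List.mem_permutations.1 h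
  rw [h1.length_eq, Finset.length_sort]

/-- number of arrangements of `s` with run lengths `a` -/
def cnt (a : List ℕ) (s : Finset ℕ) : ℕ :=
  ((permsOf s).filter (fun l => runs l = a)).card

lemma runs_map (f : ℕ → ℕ) :
    ∀ l : List ℕ, (∀ x ∈ l, ∀ y ∈ l, (y < x ↔ f y < f x)) → runs (l.map f) = runs l := by
  intro l
  match l with
  | [] => intro _; rfl
  | [x] => intro _; rfl
  | x :: y :: t =>
    intro h
    have IH := runs_map f (y :: t) (fun u hu v hv => h u (List.mem_cons_of_mem _ hu) v (List.mem_cons_of_mem _ hv))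
    have hmap : (x :: y :: t).map f = f x :: f y :: t.map f := rfl
    rw [hmap, runs_cons_cons, runs_cons_cons]
    have hiff := h x (by simp) y (by simp)
    have hyt : (y :: t).map f = f y :: t.map f := rfl
    rw [← hyt, IH]
    by_cases hxy : y < x
    · rw [if_pos hxy, if_pos (hiff.1 hxy)]
    · rw [if_neg hxy, if_neg (fun hc => hxy (hiff.2 hc))]

lemma map_mem_filter_permsOf (s t : Finset ℕ) (F : ℕ → ℕ)
    (hmem : ∀ x ∈ s, F x ∈ t) (hsurj : ∀ y ∈ t, ∃ x ∈ s, F x = y)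
    (hmono : ∀ x ∈ s, ∀ y ∈ s, (y < x ↔ F y < F x)) (a : List ℕ) (l : List ℕ)
    (hl : l ∈ (permsOf s).filter (fun l => runs l = a)) :
    l.map F ∈ (permsOf t).filter (fun l => runs l = a) := by
  rw [Finset.mem_filter] at hl ⊢
  obtain ⟨hlp, hruns⟩ := hl
  rw [mem_permsOf] at hlp
  obtain ⟨hnd, hfin⟩ := hlp
  have hmem' : ∀ x ∈ l, x ∈ s := fun x hx => hfin ▸ List.mem_toFinset.2 hx
  have hinj : ∀ x ∈ s, ∀ y ∈ s, F x = F y → x = y := by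
    intro x hx y hy hFxy
    rcases lt_trichotomy x y with h' | h' | h'
    · have := (hmono y hy x hx).1 h'
      omega
    · exact h'
    · have := (hmono x hx y hy).1 h'
      omega
  refine ⟨mem_permsOf.2 ⟨?_, ?_⟩, ?_⟩
  · exact hnd.map_on (fun x hx y hy h => hinj x (hmem' x hx) y (hmem' y hy) h)
  · ext v
    simp only [List.mem_toFinset, List.mem_map]
    constructor
    · rintro ⟨x, hx, rfl⟩
      exact hmem x (hmem' x hx)
    · intro hv
      obtain ⟨x, hx, rfl⟩ := hsurj v hv
      rw [← hfin] at hx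
      exact ⟨x, List.mem_toFinset.1 hx, rfl⟩
  · rw [runs_map F l (fun x hx y hy => hmono x (hmem' x hx) y (hmem' y hy))]
    exact hruns

lemma cnt_congr (a : List ℕ) (s t : Finset ℕ) (h : s.card = t.card) :
    cnt a s = cnt a t := by
  set n := s.card with hn
  have ht : t.card = n := h.symm
  have hs : s.card = n := rfl
  let e1 : Fin n ≃o s := s.orderIsoOfFin hs
  let e2 : Fin n ≃o t := t.orderIsoOfFin ht
  classical
  set F : ℕ → ℕ := fun v => if hv : v ∈ s then (e2 (e1.symm ⟨v, hv⟩) : ℕ) else 0 with hF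
  set G : ℕ → ℕ := fun v => if hv : v ∈ t then (e1 (e2.symm ⟨v, hv⟩) : ℕ) else 0 with hG
  have hFmem : ∀ x ∈ s, F x ∈ t := by
    intro x hx
    simp only [hF, dif_pos hx]
    exact (e2 (e1.symm ⟨x, hx⟩)).2
  have hGmem : ∀ x ∈ t, G x ∈ s := by
    intro x hx
    simp only [hG, dif_pos hx]
    exact (e1 (e2.symm ⟨x, hx⟩)).2
  have hGF : ∀ x ∈ s, G (F x) = x := by
    intro x hx
    have h1 : F x = (e2 (e1.symm ⟨x, hx⟩) : ℕ) := by simp only [hF, dif_pos hx]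
    have h2 : F x ∈ t := hFmem x hx
    simp only [hG, dif_pos h2]
    have h3 : (⟨F x, h2⟩ : t) = e2 (e1.symm ⟨x, hx⟩) := Subtype.ext h1
    rw [h3, OrderIso.symm_apply_apply, OrderIso.apply_symm_apply]
  have hFG : ∀ x ∈ t, F (G x) = x := by
    intro x hx
    have h1 : G x = (e1 (e2.symm ⟨x, hx⟩) : ℕ) := by simp only [hG, dif_pos hx]
    have h2 : G x ∈ s := hGmem x hx
    simp only [hF, dif_pos h2]
    have h3 : (⟨G x, h2⟩ : s) = e1 (e2.symm ⟨x, hx⟩) := Subtype.ext h1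
    rw [h3, OrderIso.symm_apply_apply, OrderIso.apply_symm_apply]
  have hFsurj : ∀ y ∈ t, ∃ x ∈ s, F x = y := fun y hy => ⟨G y, hGmem y hy, hFG y hy⟩
  have hGsurj : ∀ y ∈ s, ∃ x ∈ t, G x = y := fun y hy => ⟨F y, hFmem y hy, hGF y hy⟩
  have hFmono : ∀ x ∈ s, ∀ y ∈ s, (y < x ↔ F y < F x) := by
    intro x hx y hy
    simp only [hF, dif_pos hx, dif_pos hy]
    rw [Subtype.coe_lt_coe, OrderIso.lt_iff_lt, OrderIso.lt_iff_lt, Subtype.mk_lt_mk]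
  have hGmono : ∀ x ∈ t, ∀ y ∈ t, (y < x ↔ G y < G x) := by
    intro x hx y hy
    simp only [hG, dif_pos hx, dif_pos hy]
    rw [Subtype.coe_lt_coe, OrderIso.lt_iff_lt, OrderIso.lt_iff_lt, Subtype.mk_lt_mk]
  unfold cnt
  refine Finset.card_nbij' (fun l => l.map F) (fun l => l.map G)
    (fun l hl => map_mem_filter_permsOf s t F hFmem hFsurj hFmono a l hl)
    (fun l hl => map_mem_filter_permsOf t s G hGmem hGsurj hGmono a l hl) ?_ ?_
  · intro l hl
    rw [Finset.mem_coe, Finset.mem_filter, mem_permsOf] at hl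
    show List.map G (List.map F l) = l
    rw [List.map_map]
    conv_rhs => rw [← List.map_id l]
    apply List.map_congr_left
    intro x hx
    exact hGF x (hl.1.2 ▸ List.mem_toFinset.2 hx)
  · intro l hl
    rw [Finset.mem_coe, Finset.mem_filter, mem_permsOf] at hl
    show List.map F (List.map G l) = l
    rw [List.map_map]
    conv_rhs => rw [← List.map_id l]
    apply List.map_congr_left
    intro x hx
    exact hFG x (hl.1.2 ▸ List.mem_toFinset.2 hx)



lemma cnt_split (s : Finset ℕ) (a₀ a₁ : ℕ) (t : List ℕ) (h0 : 1 ≤ a₀) (h1 : 1 ≤ a₁) :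
    cnt (a₀ :: a₁ :: t) s + cnt ((a₀ + a₁) :: t) s
      = ((permsOf s).filter
          (fun l => List.IsChain Asc (l.take a₀) ∧ runs (l.drop a₀) = a₁ :: t)).card := by
  classical
  have key : ∀ l : List ℕ,
      (List.IsChain Asc (l.take a₀) ∧ runs (l.drop a₀) = a₁ :: t) ↔
      (runs l = a₀ :: a₁ :: t ∨ runs l = (a₀ + a₁) :: t) := by
    intro l
    constructor
    · rintro ⟨hch, hdr⟩
      have hdne : l.drop a₀ ≠ [] := by
        intro h
        rw [h] at hdr
        simp [runs] at hdr
      have hlen : a₀ < l.length := by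
        by_contra h
        exact hdne (List.drop_eq_nil_of_le (by omega))
      have hs := runs_structure a₀ l h0 hlen hch
      rw [hdr] at hs
      by_cases hcond : l.getD a₀ 0 < l.getD (a₀ - 1) 0
      · rw [if_pos hcond] at hs
        exact Or.inl hs
      · rw [if_neg hcond] at hs
        simp only [List.headI, List.tail] at hs
        exact Or.inr hs
    · rintro (h | h)
      · have h2 := chain_take_of_runs l _ _ h a₀ h0 le_rfl
        rw [if_pos rfl] at h2
        exact h2
      · have h2 := chain_take_of_runs l _ _ h a₀ h0 (by omega)
        rw [if_neg (by omega)] at h2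
        have : a₀ + a₁ - a₀ = a₁ := by omega
        rw [this] at h2
        exact h2
  have hfe : (permsOf s).filter
        (fun l => List.IsChain Asc (l.take a₀) ∧ runs (l.drop a₀) = a₁ :: t)
      = (permsOf s).filter (fun l => runs l = a₀ :: a₁ :: t)
        ∪ (permsOf s).filter (fun l => runs l = (a₀ + a₁) :: t) := by
    rw [← Finset.filter_or]
    exact Finset.filter_congr (fun l _ => key l)
  rw [hfe, Finset.card_union_of_disjoint]
  · rfl
  · rw [Finset.disjoint_left]
    intro l hl1 hl2
    rw [Finset.mem_filter] at hl1 hl2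
    have := hl1.2.symm.trans hl2.2
    apply_fun List.length at this
    simp at this

lemma cnt_Q (s : Finset ℕ) (a₀ a₁ : ℕ) (t : List ℕ) (h0 : 1 ≤ a₀) :
    ((permsOf s).filter
        (fun l => List.IsChain Asc (l.take a₀) ∧ runs (l.drop a₀) = a₁ :: t)).card
      = ∑ c ∈ s.powersetCard a₀, cnt (a₁ :: t) (s \ c) := by
  classical
  simp only [cnt]
  rw [← Finset.card_sigma]
  refine Finset.card_nbij'
    (fun l => ⟨(l.take a₀).toFinset, l.drop a₀⟩)
    (fun p => (p.1.sort (· ≤ ·)) ++ p.2) ?_ ?_ ?_ ?_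
  · intro l hl
    rw [Finset.mem_coe, Finset.mem_filter] at hl
    obtain ⟨hlp, hch, hdr⟩ := hl
    have hlen : l.length = s.card := length_of_mem_permsOf hlp
    rw [mem_permsOf] at hlp
    obtain ⟨hnd, hfin⟩ := hlp
    have hdne : l.drop a₀ ≠ [] := by
      intro h
      rw [h] at hdr
      simp [runs] at hdr
    have halen : a₀ < l.length := by
      by_contra h
      exact hdne (List.drop_eq_nil_of_le (by omega))
    have hndtake : (l.take a₀).Nodup := hnd.sublist (List.take_sublist _ _)
    rw [Finset.mem_coe, Finset.mem_sigma]
    constructor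
    · rw [Finset.mem_powersetCard]
      constructor
      · intro x hx
        rw [List.mem_toFinset] at hx
        rw [← hfin]
        exact List.mem_toFinset.2 (List.mem_of_mem_take hx)
      · rw [List.toFinset_card_of_nodup hndtake, List.length_take]
        omega
    · rw [Finset.mem_filter, mem_permsOf]
      refine ⟨⟨hnd.sublist (List.drop_sublist _ _), ?_⟩, hdr⟩
      ext v
      rw [List.mem_toFinset, Finset.mem_sdiff, ← hfin, List.mem_toFinset, List.mem_toFinset]
      constructor
      · intro hv
        refine ⟨List.mem_of_mem_drop hv, fun hc => ?_⟩
        exact (List.disjoint_take_drop hnd le_rfl) hc hv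
      · rintro ⟨hv, hnv⟩
        conv at hv => rw [← List.take_append_drop a₀ l]
        rcases List.mem_append.1 hv with h | h
        · exact absurd h hnv
        · exact h
  · rintro ⟨c, l'⟩ hp
    rw [Finset.mem_coe, Finset.mem_sigma, Finset.mem_powersetCard, Finset.mem_filter, mem_permsOf] at hp
    obtain ⟨⟨hcs, hcard⟩, ⟨hnd', hfin'⟩, hruns'⟩ := hp
    have hlensort : (c.sort (· ≤ ·)).length = a₀ := by
      rw [Finset.length_sort, hcard]
    rw [Finset.mem_coe, Finset.mem_filter]
    refine ⟨?_, ?_, ?_⟩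
    · rw [mem_permsOf]
      constructor
      · rw [List.nodup_append]
        refine ⟨c.sort_nodup _, hnd', ?_⟩
        intro x hx _ hx' rfl
        have h1 : x ∈ c := (Finset.mem_sort _).1 hx
        have h2 : x ∈ s \ c := hfin' ▸ List.mem_toFinset.2 hx'
        exact (Finset.mem_sdiff.1 h2).2 h1
      · rw [List.toFinset_append, Finset.sort_toFinset, hfin']
        exact Finset.union_sdiff_of_subset hcs
    · rw [List.take_left' hlensort]
      have hp : List.Pairwise (· ≤ ·) (c.sort (· ≤ ·)) := c.pairwise_sort (· ≤ ·)
      exact (hp.imp (fun h => not_lt.2 h)).isChain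
    · rw [List.drop_left' hlensort]
      exact hruns'
  · intro l hl
    rw [Finset.mem_coe, Finset.mem_filter] at hl
    obtain ⟨hlp, hch, hdr⟩ := hl
    rw [mem_permsOf] at hlp
    obtain ⟨hnd, hfin⟩ := hlp
    have hndtake : (l.take a₀).Nodup := hnd.sublist (List.take_sublist _ _)
    have hsorted : (l.take a₀).Pairwise (· ≤ ·) := by
      rw [← List.isChain_iff_pairwise]
      exact hch.imp (fun _ _ h => not_lt.1 h)
    show ((l.take a₀).toFinset.sort (· ≤ ·)) ++ l.drop a₀ = l
    rw [(List.toFinset_sort _ hndtake).2 hsorted, List.take_append_drop]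
  · rintro ⟨c, l'⟩ hp
    rw [Finset.mem_coe, Finset.mem_sigma, Finset.mem_powersetCard] at hp
    obtain ⟨⟨hcs, hcard⟩, _⟩ := hp
    have hlensort : (c.sort (· ≤ ·)).length = a₀ := by
      rw [Finset.length_sort, hcard]
    show (⟨((c.sort (· ≤ ·) ++ l').take a₀).toFinset, (c.sort (· ≤ ·) ++ l').drop a₀⟩
        : Σ _ : Finset ℕ, List ℕ) = ⟨c, l'⟩
    rw [List.take_left' hlensort, List.drop_left' hlensort, Finset.sort_toFinset]

/-- count on a standard set -/
def CNT (a : List ℕ) (n : ℕ) : ℕ := cnt a (Finset.range n)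

lemma CNT_rec (a₀ a₁ : ℕ) (t : List ℕ) (h0 : 1 ≤ a₀) (h1 : 1 ≤ a₁) (n : ℕ) :
    CNT (a₀ :: a₁ :: t) n + CNT ((a₀ + a₁) :: t) n
      = n.choose a₀ * CNT (a₁ :: t) (n - a₀) := by
  classical
  unfold CNT
  rw [cnt_split _ _ _ _ h0 h1, cnt_Q _ _ _ _ h0]
  have : ∀ c ∈ (Finset.range n).powersetCard a₀,
      cnt (a₁ :: t) (Finset.range n \ c) = cnt (a₁ :: t) (Finset.range (n - a₀)) := by
    intro c hc
    rw [Finset.mem_powersetCard] at hc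
    apply cnt_congr
    rw [Finset.card_sdiff_of_subset hc.1, Finset.card_range, Finset.card_range, hc.2]
  rw [Finset.sum_congr rfl this, Finset.sum_const, Finset.card_powersetCard,
    Finset.card_range, smul_eq_mul]

lemma CNT_base (n : ℕ) (hn : 1 ≤ n) : CNT [n] n = 1 := by
  classical
  unfold CNT cnt
  have : (permsOf (Finset.range n)).filter (fun l => runs l = [n])
      = {(Finset.range n).sort (· ≤ ·)} := by
    ext l
    rw [Finset.mem_filter, Finset.mem_singleton]
    constructor
    · rintro ⟨hlp, hruns⟩
      have hlen : l.length = n := by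
        rw [length_of_mem_permsOf hlp, Finset.card_range]
      have h2 := chain_take_of_runs l n [] hruns n hn le_rfl
      rw [List.take_of_length_le (by omega)] at h2
      refine (fun hp hs => List.Perm.eq_of_pairwise' hs ((Finset.range n).pairwise_sort (· ≤ ·)) hp) ?_ ?_
      · rw [mem_permsOf] at hlp
        rw [List.perm_ext_iff_of_nodup hlp.1 (Finset.sort_nodup _ _)]
        intro x
        rw [Finset.mem_sort, ← hlp.2, List.mem_toFinset]
      · rw [← List.isChain_iff_pairwise]
        exact h2.1.imp (fun _ _ h => not_lt.1 h)
    · rintro rfl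
      have hne : (Finset.range n).sort (· ≤ ·) ≠ [] := by
        intro h
        apply_fun List.length at h
        rw [Finset.length_sort, Finset.card_range] at h
        simp at h
        omega
      constructor
      · rw [mem_permsOf]
        exact ⟨Finset.sort_nodup _ _, Finset.sort_toFinset _ _⟩
      · rw [runs_of_chain _ hne, Finset.length_sort, Finset.card_range]
        exact ((Finset.range n).pairwise_sort (· ≤ ·)).isChain.imp (fun _ _ h => not_lt.2 h)
  rw [this, Finset.card_singleton]



def Dlist : List ℕ → ℚ
  | [] => 1
  | [x] => 1 / (x.factorial : ℚ)
  | x :: y :: t => (1 / (x.factorial : ℚ)) * Dlist (y :: t) - Dlist ((x + y) :: t)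
termination_by l => l.length
decreasing_by all_goals simp

lemma Dlist_single (x : ℕ) : Dlist [x] = 1 / (x.factorial : ℚ) := by simp [Dlist]
lemma Dlist_cons_cons (x y : ℕ) (t : List ℕ) :
    Dlist (x :: y :: t) = (1 / (x.factorial : ℚ)) * Dlist (y :: t) - Dlist ((x + y) :: t) := by
  rw [Dlist]

/-- extend a Fin-indexed family to ℕ -/
def pad {k : ℕ} (a : Fin k → ℕ) : ℕ → ℕ := fun u => if h : u < k then a ⟨u, h⟩ else 0

lemma sum_Icc_eq_pad {k : ℕ} (a : Fin k → ℕ) (i j : Fin k) :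
    ∑ x ∈ Finset.Icc i j, a x = ∑ u ∈ Finset.Icc (i : ℕ) (j : ℕ), pad a u := by
  rw [← Fin.map_valEmbedding_Icc, Finset.sum_map]
  apply Finset.sum_congr rfl
  intro x _
  simp [pad, Fin.valEmbedding, x.isLt]

lemma shift_sum (f : ℕ → ℕ) (p q : ℕ) :
    ∑ u ∈ Finset.Icc (p + 1) (q + 1), f u = ∑ u ∈ Finset.Icc p q, f (u + 1) := by
  rw [← Finset.map_add_right_Icc, Finset.sum_map]
  rfl

lemma det_Bmat_single (a : Fin 1 → ℕ) : (Bmat a).det = 1 / ((a 0).factorial : ℚ) := by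
  rw [Matrix.det_fin_one]
  simp [Bmat, Finset.Icc_self]

lemma det_Bmat_rec (m : ℕ) (a : Fin (m + 2) → ℕ) :
    (Bmat a).det = (1 / ((a 0).factorial : ℚ)) * (Bmat (fun i : Fin (m + 1) => a i.succ)).det
      - (Bmat (Fin.cons (a 0 + a 1) (fun i : Fin m => a i.succ.succ))).det := by
  rw [Matrix.det_succ_column_zero]
  rw [Fin.sum_univ_succ, Fin.sum_univ_succ]
  have hzero : ∀ i : Fin m, (Bmat a) i.succ.succ 0 = 0 := by
    intro i
    have h1 : ((i.succ.succ : Fin (m+2)) : ℕ) = (i : ℕ) + 2 := by simp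
    simp only [Bmat, Matrix.of_apply]
    rw [if_neg (by rw [h1]; simp), if_neg (by rw [h1]; simp)]
  have hs : ∑ i : Fin m, (-1 : ℚ) ^ ((i.succ.succ : Fin (m+2)) : ℕ) * (Bmat a) i.succ.succ 0 *
      ((Bmat a).submatrix i.succ.succ.succAbove Fin.succ).det = 0 := by
    apply Finset.sum_eq_zero
    intro i _
    rw [hzero i]
    ring
  rw [hs, add_zero]
  have h00 : (Bmat a) 0 0 = 1 / ((a 0).factorial : ℚ) := by
    simp [Bmat, Finset.Icc_self]
  have h10 : (Bmat a) (Fin.succ 0) 0 = 1 := by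
    have h1 : ((Fin.succ (0 : Fin (m+1)) : Fin (m+2)) : ℕ) = 1 := rfl
    simp only [Bmat, Matrix.of_apply]
    rw [if_neg (by rw [h1]; simp), if_pos (by rw [h1]; rfl)]
  have hsub0 : (Bmat a).submatrix (Fin.succAbove 0) Fin.succ
      = Bmat (fun i : Fin (m + 1) => a i.succ) := by
    ext p q
    have hrow : (0 : Fin (m+2)).succAbove p = p.succ := by
      rw [Fin.succAbove]
      simp [Fin.lt_def]
    rw [Matrix.submatrix_apply, hrow]
    have hps : ((p.succ : Fin (m+2)) : ℕ) = (p : ℕ) + 1 := by simp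
    have hqs : ((q.succ : Fin (m+2)) : ℕ) = (q : ℕ) + 1 := by simp
    have hsum : ∑ x ∈ Finset.Icc p.succ q.succ, a x = ∑ x ∈ Finset.Icc p q, a x.succ := by
      rw [sum_Icc_eq_pad, sum_Icc_eq_pad, hps, hqs, shift_sum]
      apply Finset.sum_congr rfl
      intro u hu
      rw [Finset.mem_Icc] at hu
      have hu2 : u < m + 1 := by omega
      simp only [pad, dif_pos hu2, dif_pos (by omega : u + 1 < m + 2)]
      rfl
    simp only [Bmat, Matrix.of_apply, hps, hqs, hsum]
    split_ifs <;> first | rfl | omega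
  have hsub1 : (Bmat a).submatrix (Fin.succ (0 : Fin (m+1))).succAbove Fin.succ
      = Bmat (Fin.cons (a 0 + a 1) (fun i : Fin m => a i.succ.succ)) := by
    ext p q
    rw [Matrix.submatrix_apply]
    set b : Fin (m + 1) → ℕ := Fin.cons (a 0 + a 1) (fun i : Fin m => a i.succ.succ) with hb
    have hpadb : ∀ u : ℕ, u ≥ 1 → pad b u = pad a (u + 1) := by
      intro u hu
      obtain ⟨u', rfl⟩ : ∃ u', u = u' + 1 := ⟨u - 1, by omega⟩
      simp only [pad]
      by_cases h : u' + 1 < m + 1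
      · rw [dif_pos h, dif_pos (by omega : u' + 1 + 1 < m + 2)]
        have : (⟨u' + 1, h⟩ : Fin (m+1)) = (⟨u', by omega⟩ : Fin m).succ := by
          ext; simp
        rw [this, hb, Fin.cons_succ]
        exact congrArg a (by ext; simp)
      · rw [dif_neg h, dif_neg (by omega)]
    rcases Fin.eq_zero_or_eq_succ p with rfl | ⟨p', rfl⟩
    · -- row 0 of submatrix: row 0 of Bmat a, column q.succ
      have hrow : (Fin.succ (0 : Fin (m+1))).succAbove 0 = 0 := rfl
      rw [hrow]
      have hsum : ∑ x ∈ Finset.Icc (0 : Fin (m+1)) q, b x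
          = ∑ x ∈ Finset.Icc (0 : Fin (m+2)) q.succ, a x := by
      -- Σ_{0..q} b = b 0 + Σ_{1..q} b; Σ_{0..q+1} a = a 0 + a 1 + Σ_{2..q+1} a
        rw [sum_Icc_eq_pad, sum_Icc_eq_pad]
        have hq : ((q.succ : Fin (m+2)) : ℕ) = (q : ℕ) + 1 := by simp
        rw [hq]
        show ∑ u ∈ Finset.Icc 0 (q : ℕ), pad b u = ∑ u ∈ Finset.Icc 0 ((q : ℕ) + 1), pad a u
        have e1 : Finset.Icc 0 (q : ℕ) = insert 0 (Finset.Icc 1 (q : ℕ)) := by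
          ext u
          simp [Finset.mem_Icc, Finset.mem_insert]
          omega
        have e2 : Finset.Icc 0 ((q : ℕ) + 1) = insert 0 (insert 1 (Finset.Icc 2 ((q : ℕ) + 1))) := by
          ext u
          simp [Finset.mem_Icc, Finset.mem_insert]
          omega
        rw [e1, e2, Finset.sum_insert (by simp), Finset.sum_insert (by simp [Finset.mem_insert]),
          Finset.sum_insert (by simp)]
        have h2 : ∑ u ∈ Finset.Icc 1 (q : ℕ), pad b u = ∑ u ∈ Finset.Icc 2 ((q : ℕ) + 1), pad a u := by
          rw [show Finset.Icc 2 ((q : ℕ) + 1) = Finset.Icc (1 + 1) ((q : ℕ) + 1) from rfl,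
            shift_sum (pad a) 1 (q : ℕ)]
          apply Finset.sum_congr rfl
          intro u hu
          rw [Finset.mem_Icc] at hu
          exact hpadb u (by omega)
        rw [h2]
        have hb0 : pad b 0 = a 0 + a 1 := by
          simp only [pad, dif_pos (by omega : (0:ℕ) < m + 1)]
          show b 0 = _
          rw [hb, Fin.cons_zero]
        have ha0 : pad a 0 = a 0 := by
          simp only [pad, dif_pos (by omega : (0:ℕ) < m + 2)]
          rfl
        have ha1 : pad a 1 = a 1 := by
          simp only [pad, dif_pos (by omega : (1:ℕ) < m + 2)]
          rfl
        rw [hb0, ha0, ha1]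
        push_cast
        ring
      simp only [Bmat, Matrix.of_apply, hsum]
      have h0a : ((0 : Fin (m+2)) : ℕ) = 0 := rfl
      have h0b : ((0 : Fin (m+1)) : ℕ) = 0 := rfl
      rw [if_pos (by omega), if_pos (by omega)]
    · -- row p'.succ : maps to p'.succ.succ
      have hrow : (Fin.succ (0 : Fin (m+1))).succAbove p'.succ = p'.succ.succ := by
        rw [Fin.succAbove]
        have : ¬ (p'.succ.castSucc < Fin.succ (0 : Fin (m+1))) := by
          rw [Fin.lt_def]
          simp
        rw [if_neg this]
      rw [hrow]
      have hps : ((p'.succ.succ : Fin (m+2)) : ℕ) = (p' : ℕ) + 2 := by simp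
      have hps1 : ((p'.succ : Fin (m+1)) : ℕ) = (p' : ℕ) + 1 := by simp
      have hqs : ((q.succ : Fin (m+2)) : ℕ) = (q : ℕ) + 1 := by simp
      have hsum : ∑ x ∈ Finset.Icc p'.succ.succ q.succ, a x = ∑ x ∈ Finset.Icc p'.succ q, b x := by
        rw [sum_Icc_eq_pad, sum_Icc_eq_pad, hps, hps1, hqs]
        have h22 : (p' : ℕ) + 2 = ((p' : ℕ) + 1) + 1 := rfl
        rw [h22, shift_sum (pad a) ((p' : ℕ) + 1) (q : ℕ)]
        apply Finset.sum_congr rfl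
        intro u hu
        rw [Finset.mem_Icc] at hu
        exact (hpadb u (by omega)).symm
      simp only [Bmat, Matrix.of_apply, hps, hps1, hqs, hsum]
      split_ifs <;> first | rfl | omega
  rw [hsub0, hsub1, h00, h10]
  have hc0 : ((0 : Fin (m+2)) : ℕ) = 0 := rfl
  have hc1 : ((Fin.succ (0 : Fin (m+1)) : Fin (m+2)) : ℕ) = 1 := rfl
  rw [hc0, hc1]
  ring


lemma det_Bmat_eq_Dlist : ∀ (k : ℕ) (a : Fin (k + 1) → ℕ),
    (Bmat a).det = Dlist (List.ofFn a) := by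
  intro k
  induction k with
  | zero =>
    intro a
    rw [det_Bmat_single]
    have : List.ofFn a = [a 0] := by
      rw [List.ofFn_succ]
      simp
    rw [this, Dlist_single]
  | succ m IH =>
    intro a
    rw [det_Bmat_rec]
    have h1 : List.ofFn a = a 0 :: a 1 :: List.ofFn (fun i : Fin m => a i.succ.succ) := by
      rw [List.ofFn_succ, List.ofFn_succ]
      rfl
    rw [h1, Dlist_cons_cons]
    have h2 : List.ofFn (fun i : Fin m.succ => a i.succ)
        = a 1 :: List.ofFn (fun i : Fin m => a i.succ.succ) := by
      rw [List.ofFn_succ]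
      rfl
    have h3 : List.ofFn (Fin.cons (a 0 + a 1) (fun i : Fin m => a i.succ.succ) : Fin (m+1) → ℕ)
        = (a 0 + a 1) :: List.ofFn (fun i : Fin m => a i.succ.succ) := by
      rw [List.ofFn_succ]
      rfl
    rw [IH (fun i => a i.succ), IH (Fin.cons (a 0 + a 1) (fun i : Fin m => a i.succ.succ)), h2, h3]

lemma CNT_eq : ∀ (m : ℕ) (a : List ℕ), a.length ≤ m → a ≠ [] → (∀ x ∈ a, 1 ≤ x) →
    (CNT a a.sum : ℚ) = (a.sum.factorial : ℚ) * Dlist a := by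
  intro m
  induction m with
  | zero =>
    intro a hlen hne _
    cases a with
    | nil => exact absurd rfl hne
    | cons x t => simp at hlen
  | succ m IH =>
    intro a hlen hne hpos
    match a with
    | [x] =>
      have hx : 1 ≤ x := hpos x (by simp)
      have hsum : ([x] : List ℕ).sum = x := by simp
      rw [hsum, CNT_base x hx, Dlist_single]
      have : (x.factorial : ℚ) ≠ 0 := by
        exact_mod_cast x.factorial_ne_zero
      field_simp
      norm_num
    | x :: y :: t =>
      have hx : 1 ≤ x := hpos x (by simp)
      have hy : 1 ≤ y := hpos y (by simp)
      set n := (x :: y :: t).sum with hn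
      have hn2 : n = x + (y :: t).sum := by rw [hn]; simp
      have hrec := CNT_rec x y t hx hy n
      have hnx : n - x = (y :: t).sum := by omega
      have hsum2 : ((x + y) :: t).sum = n := by rw [hn]; simp; ring
      have IH1 := IH (y :: t) (by simp at hlen ⊢; omega) (by simp)
        (fun z hz => hpos z (List.mem_cons_of_mem _ hz))
      have IH2 := IH ((x + y) :: t) (by simp at hlen ⊢; omega) (by simp)
        (by
          intro z hz
          rcases List.mem_cons.1 hz with rfl | hz'
          · omega
          · exact hpos z (List.mem_cons_of_mem _ (List.mem_cons_of_mem _ hz')))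
      rw [hnx] at hrec
      rw [hsum2] at IH2
      have hcast : (CNT (x :: y :: t) n : ℚ) + (CNT ((x+y) :: t) n : ℚ)
          = (n.choose x : ℚ) * (CNT (y :: t) ((y :: t).sum) : ℚ) := by
        exact_mod_cast congrArg (fun z : ℕ => (z : ℚ)) hrec
      rw [IH1, IH2] at hcast
      have hxn : x ≤ n := by omega
      have hchoose := Nat.choose_mul_factorial_mul_factorial hxn
      have hchooseQ : (n.choose x : ℚ) * (x.factorial : ℚ) * ((n - x).factorial : ℚ)
          = (n.factorial : ℚ) := by exact_mod_cast hchoose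
      rw [hnx] at hchooseQ
      have hfx : (x.factorial : ℚ) ≠ 0 := by exact_mod_cast x.factorial_ne_zero
      rw [Dlist_cons_cons]
      have : (CNT (x :: y :: t) n : ℚ)
          = (n.choose x : ℚ) * (((y :: t).sum.factorial : ℚ) * Dlist (y :: t))
            - (n.factorial : ℚ) * Dlist ((x + y) :: t) := by linarith
      rw [this]
      have hch : (n.choose x : ℚ) * ((y :: t).sum.factorial : ℚ)
          = (n.factorial : ℚ) / (x.factorial : ℚ) := by
        rw [eq_div_iff hfx]
        linear_combination hchooseQ
      calc (n.choose x : ℚ) * (((y :: t).sum.factorial : ℚ) * Dlist (y :: t))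
            - (n.factorial : ℚ) * Dlist ((x + y) :: t)
          = ((n.choose x : ℚ) * ((y :: t).sum.factorial : ℚ)) * Dlist (y :: t)
            - (n.factorial : ℚ) * Dlist ((x + y) :: t) := by ring
        _ = ((n.factorial : ℚ) / (x.factorial : ℚ)) * Dlist (y :: t)
            - (n.factorial : ℚ) * Dlist ((x + y) :: t) := by rw [hch]
        _ = (n.factorial : ℚ) * (1 / (x.factorial : ℚ) * Dlist (y :: t) - Dlist ((x + y) :: t)) := by
            field_simp

def perms (n : ℕ) : Finset (List ℕ) := permsOf (Finset.range n)

lemma mem_perms {n : ℕ} {l : List ℕ} : l ∈ perms n ↔ l.Perm (List.range n) := by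
  show l ∈ ((Finset.range n).sort (· ≤ ·)).permutations ↔ _
  rw [List.mem_permutations, Finset.sort_range]

lemma descents_compl (n : ℕ) : ∀ l : List ℕ, l.Nodup → (∀ x ∈ l, x < n) →
    descents (l.map (fun v => n - 1 - v)) + descents l = l.length - 1 := by
  intro l
  match l with
  | [] => intros; rfl
  | [x] => intros; rfl
  | x :: y :: t =>
    intro hnd hmem
    have IH := descents_compl n (y :: t) (hnd.of_cons)
      (fun z hz => hmem z (List.mem_cons_of_mem _ hz))
    have hxy : x ≠ y := by
      intro h
      rw [List.nodup_cons] at hnd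
      exact hnd.1 (h ▸ List.mem_cons_self)
    have hxn : x < n := hmem x (by simp)
    have hyn : y < n := hmem y (by simp)
    have hmap : (x :: y :: t).map (fun v => n - 1 - v)
        = (n - 1 - x) :: (n - 1 - y) :: t.map (fun v => n - 1 - v) := rfl
    rw [hmap, descents_cons_cons, descents_cons_cons]
    have hmy : ((y :: t).map (fun v => n - 1 - v)) = (n - 1 - y) :: t.map (fun v => n - 1 - v) := rfl
    rw [← hmy]
    simp only [List.length_cons] at IH ⊢
    by_cases h : y < x
    · rw [if_pos h, if_neg (by omega)]
      omega
    · rw [if_neg h, if_pos (by omega)]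
      omega

lemma perms_compl_mem (n : ℕ) (hn : 1 ≤ n) (l : List ℕ) (hl : l ∈ perms n) :
    l.map (fun v => n - 1 - v) ∈ perms n ∧ (l.map (fun v => n - 1 - v)).map (fun v => n - 1 - v) = l := by
  rw [perms, mem_permsOf] at hl
  obtain ⟨hnd, hfin⟩ := hl
  have hmem : ∀ x ∈ l, x < n := by
    intro x hx
    have : x ∈ Finset.range n := hfin ▸ List.mem_toFinset.2 hx
    exact Finset.mem_range.1 this
  constructor
  · rw [perms, mem_permsOf]
    constructor
    · apply hnd.map_on
      intro u hu v hv huv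
      have hu' := hmem u hu
      have hv' := hmem v hv
      omega
    · ext v
      rw [List.mem_toFinset, List.mem_map, Finset.mem_range]
      constructor
      · rintro ⟨u, hu, rfl⟩
        have := hmem u hu
        omega
      · intro hv
        refine ⟨n - 1 - v, ?_, by omega⟩
        rw [← List.mem_toFinset, hfin, Finset.mem_range]
        omega
  · rw [List.map_map]
    conv_rhs => rw [← List.map_id l]
    apply List.map_congr_left
    intro x hx
    have := hmem x hx
    simp only [Function.comp_apply, id_eq]
    omega

lemma E_symm (n d : ℕ) (hn : 1 ≤ n) (hd : d ≤ n - 1) :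
    ((perms n).filter (fun l => descents l = d)).card
      = ((perms n).filter (fun l => descents l = n - 1 - d)).card := by
  refine Finset.card_nbij' (fun l => l.map (fun v => n - 1 - v)) (fun l => l.map (fun v => n - 1 - v))
    ?_ ?_ ?_ ?_
  · intro l hl
    rw [Finset.mem_coe, Finset.mem_filter] at hl ⊢
    obtain ⟨hlp, hdes⟩ := hl
    obtain ⟨hmm, _⟩ := perms_compl_mem n hn l hlp
    refine ⟨hmm, ?_⟩
    have hnd : l.Nodup := (mem_permsOf.1 hlp).1
    have hmem : ∀ x ∈ l, x < n := by
      intro x hx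
      have : x ∈ Finset.range n := (mem_permsOf.1 hlp).2 ▸ List.mem_toFinset.2 hx
      exact Finset.mem_range.1 this
    have hcompl := descents_compl n l hnd hmem
    have hlen : l.length = n := by
      rw [length_of_mem_permsOf hlp, Finset.card_range]
    show descents (l.map (fun v => n - 1 - v)) = n - 1 - d
    omega
  · intro l hl
    rw [Finset.mem_coe, Finset.mem_filter] at hl ⊢
    obtain ⟨hlp, hdes⟩ := hl
    obtain ⟨hmm, _⟩ := perms_compl_mem n hn l hlp
    refine ⟨hmm, ?_⟩
    have hnd : l.Nodup := (mem_permsOf.1 hlp).1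
    have hmem : ∀ x ∈ l, x < n := by
      intro x hx
      have : x ∈ Finset.range n := (mem_permsOf.1 hlp).2 ▸ List.mem_toFinset.2 hx
      exact Finset.mem_range.1 this
    have hcompl := descents_compl n l hnd hmem
    have hlen : l.length = n := by
      rw [length_of_mem_permsOf hlp, Finset.card_range]
    show descents (l.map (fun v => n - 1 - v)) = d
    omega
  · intro l hl
    rw [Finset.mem_coe, Finset.mem_filter] at hl
    exact (perms_compl_mem n hn l hl.1).2
  · intro l hl
    rw [Finset.mem_coe, Finset.mem_filter] at hl
    exact (perms_compl_mem n hn l hl.1).2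

lemma ofFn_getD (lst : List ℕ) (K : ℕ) (h : lst.length = K) :
    List.ofFn (fun i : Fin K => lst.getD i 0) = lst := by
  subst h
  apply List.ext_getElem
  · simp
  · intro i h1 h2
    simp only [List.getElem_ofFn]
    exact (List.getD_eq_getElem lst 0 h2).symm ▸ rfl

lemma E_fiber (n K : ℕ) (hK : 1 ≤ K) (hn : 1 ≤ n) :
    ((perms n).filter (fun l => descents l = K - 1)).card
      = ∑ f ∈ (Finset.Nat.antidiagonalTuple K n).filter (fun f => ∀ i, 1 ≤ f i),
          CNT (List.ofFn f) n := by
  classical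
  have hmaps : ∀ l ∈ (perms n).filter (fun l => descents l = K - 1),
      (fun i : Fin K => (runs l).getD i 0)
        ∈ (Finset.Nat.antidiagonalTuple K n).filter (fun f => ∀ i, 1 ≤ f i) := by
    intro l hl
    rw [Finset.mem_filter] at hl
    obtain ⟨hlp, hdes⟩ := hl
    have hlen : l.length = n := by
      rw [length_of_mem_permsOf hlp, Finset.card_range]
    have hlne : l ≠ [] := by
      intro h
      rw [h] at hlen
      simp at hlen
      omega
    have hrl : (runs l).length = K := by
      rw [runs_length l hlne, hdes]
      omega
    rw [Finset.mem_filter, Finset.Nat.mem_antidiagonalTuple]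
    constructor
    · have heq : List.ofFn (fun i : Fin K => (runs l).getD i 0) = runs l := ofFn_getD _ _ hrl
      have hsum : (List.ofFn (fun i : Fin K => (runs l).getD i 0)).sum = (runs l).sum := by
        rw [heq]
      rw [List.sum_ofFn] at hsum
      rw [hsum, runs_sum, hlen]
    · intro i
      have hi : (i : ℕ) < (runs l).length := by rw [hrl]; exact i.isLt
      show 1 ≤ (runs l).getD i 0
      rw [List.getD_eq_getElem _ 0 hi]
      exact runs_pos l _ (List.getElem_mem hi)
  have hmain := Finset.card_eq_sum_card_fiberwise
    (f := fun l => (fun i : Fin K => (runs l).getD i 0))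
    (s := (perms n).filter (fun l => descents l = K - 1))
    (t := (Finset.Nat.antidiagonalTuple K n).filter (fun f => ∀ i, 1 ≤ f i))
    hmaps
  · rw [hmain]
    apply Finset.sum_congr rfl
    intro f hf
    rw [Finset.mem_filter, Finset.Nat.mem_antidiagonalTuple] at hf
    obtain ⟨hfs, hfp⟩ := hf
    show _ = cnt (List.ofFn f) (Finset.range n)
    unfold cnt
    rw [Finset.filter_filter]
    apply congrArg
    apply Finset.filter_congr
    intro l hl
    show (descents l = K - 1 ∧ (fun i : Fin K => (runs l).getD i 0) = f) ↔ runs l = List.ofFn f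
    clear hmaps hmain
    have hlen : l.length = n := by
      rw [length_of_mem_permsOf hl, Finset.card_range]
    have hlne : l ≠ [] := by
      intro h
      rw [h] at hlen
      simp at hlen
      omega
    constructor
    · rintro ⟨hdes, hg⟩
      have hrl : (runs l).length = K := by
        rw [runs_length l hlne, hdes]
        omega
      rw [← ofFn_getD (runs l) K hrl]
      apply congrArg
      exact hg
    · intro hruns
      have hrlen : (runs l).length = K := by
        rw [hruns, List.length_ofFn]
      constructor
      · have := runs_length l hlne
        omega
      · funext i
        rw [hruns]
        rw [List.getD_eq_getElem _ 0 (by rw [List.length_ofFn]; exact i.isLt)]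
        simp


/-- The Eulerian number `E_{d+k,d}` (the number of permutations of length
`d + k` with exactly `d` descents) equals the sum, over all `k`-tuples
`(a_1, ..., a_k)` of positive integers with `a_1 + ⋯ + a_k = d + k`, of
`(d+k)! * det B(a_1, ..., a_k)`. -/
theorem eulerian_eq_sum_det (d k : ℕ) (hk : 1 ≤ k) :
    (Nat.card {l : List ℕ // l.Perm (List.range (d + k)) ∧ descents l = d} : ℚ) =
      ∑ a ∈ (Finset.Nat.antidiagonalTuple k (d + k)).filter (fun a => ∀ i, 1 ≤ a i),
        ((d + k).factorial : ℚ) * (Bmat a).det := by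
  classical
  set n := d + k with hn
  have hn1 : 1 ≤ n := by omega
  -- step 1 : Nat.card = filter card
  have hcard : Nat.card {l : List ℕ // l.Perm (List.range n) ∧ descents l = d}
      = ((perms n).filter (fun l => descents l = d)).card := by
    have he : {l : List ℕ // l.Perm (List.range n) ∧ descents l = d}
        ≃ {l : List ℕ // l ∈ (perms n).filter (fun l => descents l = d)} := by
      apply Equiv.subtypeEquivRight
      intro l
      rw [Finset.mem_filter, mem_perms]
    rw [Nat.card_congr he, Nat.card_eq_fintype_card, Fintype.card_coe]
  rw [hcard]
  -- step 2 : symmetry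
  have hsymm := E_symm n d hn1 (by omega)
  have hd2 : n - 1 - d = k - 1 := by omega
  rw [hd2] at hsymm
  rw [hsymm]
  -- step 3 : fibers
  rw [E_fiber n k hk hn1]
  -- step 4 : per fiber
  push_cast
  apply Finset.sum_congr rfl
  intro f hf
  rw [Finset.mem_filter, Finset.Nat.mem_antidiagonalTuple] at hf
  obtain ⟨hfs, hfp⟩ := hf
  obtain ⟨k', rfl⟩ : ∃ k', k = k' + 1 := ⟨k - 1, by omega⟩
  have hne : List.ofFn f ≠ [] := by
    simp [List.ofFn_succ]
  have hpos : ∀ x ∈ List.ofFn f, 1 ≤ x := by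
    intro x hx
    rw [List.mem_ofFn] at hx
    obtain ⟨i, rfl⟩ := hx
    exact hfp i
  have hsum : (List.ofFn f).sum = n := by
    rw [List.sum_ofFn]
    exact hfs
  have := CNT_eq (List.ofFn f).length (List.ofFn f) le_rfl hne hpos
  rw [hsum] at this
  rw [this, det_Bmat_eq_Dlist k' f]
end

section
/- Let D(a_1,...,a_k) = det(B(a_1,...,a_k)), where B(a_1,...,a_k) is the k×k matrix with entries b_{i,j} = 1/(a_i + ... + a_j)! for i ≤ j, b_{i,i-1} = 1, and b_{i,j} = 0 for i ≥ j+2. Then for k ≥ 2 and positive integers a_1,...,a_k, the recursion D(a_1, a_2, ..., a_k) = (1/a_1!) · D(a_2, a_3, ..., a_k) − D(a_1 + a_2, a_3, ..., a_k) holds. -/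
/-- The matrix `B(a_1, ..., a_k)` built from a list `a` of length `k`: entry
`(i,j)` is `1/(a_i + ⋯ + a_j)!` for `i ≤ j`, is `1` for `i = j + 1`, and is
`0` for `i ≥ j + 2` (0-indexed here). -/
def BmatL (a : List ℕ) : Matrix (Fin a.length) (Fin a.length) ℚ :=
  Matrix.of fun i j =>
    if (i : ℕ) ≤ (j : ℕ) then
      (1 : ℚ) / (Nat.factorial (∑ m ∈ Finset.Icc (i : ℕ) (j : ℕ), a.getD m 0) : ℚ)
    else if (i : ℕ) = (j : ℕ) + 1 then 1
    else 0

/-- `D(a_1, ..., a_k) = det B(a_1, ..., a_k)`. -/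
def D (a : List ℕ) : ℚ := (BmatL a).det

lemma sum_shift (x : ℕ) (l : List ℕ) (i j : ℕ) :
    ∑ m ∈ Finset.Icc (i+1) (j+1), (x::l).getD m 0 = ∑ m ∈ Finset.Icc i j, l.getD m 0 := by
  rw [← Finset.map_add_right_Icc]
  rw [Finset.sum_map]
  simp [addRightEmbedding]

lemma sum_tail (x y : ℕ) (l : List ℕ) (i j : ℕ) :
    ∑ m ∈ Finset.Icc (i+1) j, (x::l).getD m 0 = ∑ m ∈ Finset.Icc (i+1) j, (y::l).getD m 0 := by
  apply Finset.sum_congr rfl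
  intro m hm
  simp only [Finset.mem_Icc] at hm
  obtain ⟨m', rfl⟩ : ∃ m', m = m' + 1 := ⟨m - 1, by omega⟩
  simp

lemma sum_head (x : ℕ) (l : List ℕ) (j : ℕ) :
    ∑ m ∈ Finset.Icc 0 j, (x::l).getD m 0 = x + ∑ m ∈ Finset.Icc 1 j, (x::l).getD m 0 := by
  have h : Finset.Icc 0 j = insert 0 (Finset.Icc 1 j) := by
    ext m; simp [Finset.mem_Icc]; omega
  rw [h, Finset.sum_insert (by simp)]
  simp

lemma sum_merge (a1 a2 : ℕ) (rest : List ℕ) (j : ℕ) :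
    ∑ m ∈ Finset.Icc 0 (j+1), (a1::a2::rest).getD m 0
      = ∑ m ∈ Finset.Icc 0 j, ((a1+a2)::rest).getD m 0 := by
  rw [sum_head, sum_head]
  have h1 : ∑ m ∈ Finset.Icc 1 (j+1), (a1::a2::rest).getD m 0
      = ∑ m ∈ Finset.Icc 0 j, (a2::rest).getD m 0 := by
    have := sum_shift a1 (a2::rest) 0 j
    simpa using this
  rw [h1, sum_head]
  have h2 : ∑ m ∈ Finset.Icc 1 j, (a2::rest).getD m 0
      = ∑ m ∈ Finset.Icc 1 j, ((a1+a2)::rest).getD m 0 := by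
    have := sum_tail a2 (a1+a2) rest 0 j
    simpa using this
  rw [h2]
  simp [add_assoc]

/-- The recursion
`D(a_1, a_2, ..., a_k) = (1/a_1!) * D(a_2, ..., a_k) - D(a_1 + a_2, a_3, ..., a_k)`. -/
theorem D_recursion (a1 a2 : ℕ) (rest : List ℕ) (h1 : 0 < a1) (h2 : 0 < a2)
    (hrest : ∀ x ∈ rest, 0 < x) :
    D (a1 :: a2 :: rest) =
      (1 / (Nat.factorial a1 : ℚ)) * D (a2 :: rest) - D ((a1 + a2) :: rest) := by
  classical
  set n := rest.length with hn
  let M : Matrix (Fin (n + 2)) (Fin (n + 2)) ℚ := BmatL (a1 :: a2 :: rest)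
  let M1 : Matrix (Fin (n + 1)) (Fin (n + 1)) ℚ := BmatL (a2 :: rest)
  let M2 : Matrix (Fin (n + 1)) (Fin (n + 1)) ℚ := BmatL ((a1 + a2) :: rest)
  show M.det = (1 / (Nat.factorial a1 : ℚ)) * M1.det - M2.det
  have hM : ∀ i j : Fin (n + 2), M i j =
      if (i : ℕ) ≤ (j : ℕ) then
        (1 : ℚ) / (Nat.factorial (∑ m ∈ Finset.Icc (i : ℕ) (j : ℕ),
          (a1 :: a2 :: rest).getD m 0) : ℚ)
      else if (i : ℕ) = (j : ℕ) + 1 then 1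
      else 0 := fun i j => rfl
  have hM1 : ∀ i j : Fin (n + 1), M1 i j =
      if (i : ℕ) ≤ (j : ℕ) then
        (1 : ℚ) / (Nat.factorial (∑ m ∈ Finset.Icc (i : ℕ) (j : ℕ),
          (a2 :: rest).getD m 0) : ℚ)
      else if (i : ℕ) = (j : ℕ) + 1 then 1
      else 0 := fun i j => rfl
  have hM2 : ∀ i j : Fin (n + 1), M2 i j =
      if (i : ℕ) ≤ (j : ℕ) then
        (1 : ℚ) / (Nat.factorial (∑ m ∈ Finset.Icc (i : ℕ) (j : ℕ),
          ((a1 + a2) :: rest).getD m 0) : ℚ)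
      else if (i : ℕ) = (j : ℕ) + 1 then 1
      else 0 := fun i j => rfl
  have hM00 : M 0 0 = 1 / (Nat.factorial a1 : ℚ) := by
    rw [hM]; simp
  have hM10 : M 1 0 = 1 := by
    rw [hM]; norm_num
  have hMi0 : ∀ i : Fin n, M i.succ.succ 0 = 0 := by
    intro i
    rw [hM]
    norm_num
  have hm0 : M.submatrix ((0 : Fin (n + 2)).succAbove) Fin.succ = M1 := by
    ext i j
    rw [Matrix.submatrix_apply, Fin.zero_succAbove, hM, hM1]
    simp only [Fin.val_succ]
    rw [sum_shift a1 (a2::rest) i j]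
    simp [Nat.succ_le_succ_iff]
  have hm1 : M.submatrix ((1 : Fin (n + 2)).succAbove) Fin.succ = M2 := by
    ext i j
    induction i using Fin.cases with
    | zero =>
        have hsA : ((1 : Fin (n + 2)).succAbove 0) = 0 := Fin.succ_succAbove_zero 0
        rw [Matrix.submatrix_apply, hsA, hM, hM2]
        simp only [Fin.val_succ, Fin.val_zero]
        simp only [Nat.zero_le, ↓reduceIte]
        rw [sum_merge]
    | succ i =>
        have hsA : ((1 : Fin (n + 2)).succAbove i.succ) = i.succ.succ :=
          Fin.succ_succAbove_succ 0 i
        rw [Matrix.submatrix_apply, hsA, hM, hM2]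
        simp only [Fin.val_succ]
        by_cases hij : (i : ℕ) + 1 ≤ (j : ℕ)
        · rw [if_pos (by omega), if_pos hij]
          congr 3
          obtain ⟨j', hj⟩ : ∃ j', (j : ℕ) = j' + 1 := ⟨(j : ℕ) - 1, by omega⟩
          rw [hj, sum_shift a1 (a2::rest) ((i : ℕ) + 1) (j' + 1)]
          exact sum_tail a2 (a1 + a2) rest i (j' + 1)
        · rw [if_neg (by omega), if_neg hij]
          by_cases he : (i : ℕ) + 1 = (j : ℕ) + 1
          · rw [if_pos (by omega), if_pos he]
          · rw [if_neg (by omega), if_neg he]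
  rw [Matrix.det_succ_column_zero M, Fin.sum_univ_succ, Fin.sum_univ_succ]
  have hz : ∀ i : Fin n,
      (-1 : ℚ) ^ (((i.succ.succ : Fin (n + 2))) : ℕ) * M i.succ.succ 0 *
        (M.submatrix (Fin.succAbove i.succ.succ) Fin.succ).det = 0 := by
    intro i
    rw [hMi0]
    ring
  rw [Finset.sum_congr rfl (fun i _ => hz i), Finset.sum_const_zero]
  have hsucc0 : (Fin.succ 0 : Fin (n + 2)) = 1 := rfl
  rw [hM00, hm0, hsucc0, hM10, hm1]
  simp
  ring
end
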